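/- Let M be a closed manifold, L: TM → ℝ a Tonelli Lagrangian, and e > c_u(L). Let γ be a periodic orbit of L with energy e, n ≥ 1 an integer, and suppose there exist infinitely many positive integers k_1 < k_2 < k_3 < ... such that all the iterates γ^{n k_i} lie in the same connected component of the space W^{1,2}(ℝ/ℤ, M) × (0,∞) of periodic curves (i.e. they are all freely homotopic to one another). Then S_e(γ^n) > 0. -/
import Mathlib


/-!
Abstract formalization of the setting of the paper
"Waist theorems for Tonelli systems in higher dimensions" (Asselle–Mazzucchelli).

A Tonelli Lagrangian `L : TM → ℝ` on a closed manifold `M` is encoded through the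
data canonically attached to it: the space `𝓜 = W^{1,2}(ℝ/ℤ, M) × (0,∞)` of
periodic curves, the free-period action functionals `S_e(Γ,p) = ∫₀ᵖ L(γ,γ̇) dt + p·e`
(recorded through their energy-independent part `lagAction (Γ,p) = ∫₀ᵖ L(γ,γ̇) dt`),
the periodic Euler–Lagrange orbits with energy `e` (the critical points of `S_e`),
the Mañé critical values `c(L)` and `c_u(L)`, the value `e₀(L) = max E(·,0)`,
the Euler–Lagrange flow on the phase space `TM` and the Aubry set `𝓐(L) ⊆ TM`,
the Morse index and nullity of `S_e` at its critical points, hyperbolicity of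
periodic orbits, iteration, time-shift and time-reversal of periodic curves,
the free homotopy class of a periodic curve (a conjugacy class in `π₁(M)`), and
geometric equivalence of periodic orbits.  The defining properties of these data
that are used in the paper are recorded as axioms (fields) of the structure.
-/

/-- The set `(0, ∞)` of possible periods of a periodic curve. -/
abbrev PosPeriod : Type := {p : ℝ // 0 < p}

/-- Abstract encoding of a Tonelli Lagrangian system on a closed manifold. -/
structure TonelliSystem where
  /-- points of the closed configuration manifold `M` -/
  Conf : Type
  /-- points of the phase space `TM` -/
  Phase : Type
  /-- the Euler–Lagrange flow `φ_L^t : TM → TM` -/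
  flow : ℝ → Phase → Phase
  /-- the Euler–Lagrange solution `t ↦ γ(t) ∈ M` with initial condition
  `(γ(0), γ̇(0)) = z ∈ TM` -/
  elSolution : Phase → ℝ → Conf
  /-- the loop space `W^{1,2}(ℝ/ℤ, M)`, with its `W^{1,2}` topology -/
  Loop : Type
  [instLoopTop : TopologicalSpace Loop]
  /-- evaluation: the `p`-periodic curve `γ(t) = Γ(t/p)` associated with `(Γ,p)` -/
  eval : Loop × PosPeriod → ℝ → Conf
  /-- the lift `t ↦ (γ(t), γ̇(t))` of a periodic curve to `TM`, as a subset of `TM` -/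
  phaseImage : Loop × PosPeriod → Set Phase
  /-- the Lagrangian part of the action: `(Γ,p) ↦ ∫₀ᵖ L(γ(t), γ̇(t)) dt` -/
  lagAction : Loop × PosPeriod → ℝ
  /-- `γ = (Γ,p)` is a `p`-periodic solution of the Euler–Lagrange equation of `L`
  with energy `E(γ,γ̇) ≡ e`, i.e. a critical point of the free-period action `S_e` -/
  IsOrbit : ℝ → Loop × PosPeriod → Prop
  /-- the `m`-th iterate `γ^m = (Γ^m, mp)`, `Γ^m(t) = Γ(mt)`, of a periodic curve
  (meaningful for `m ≥ 1`) -/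
  iterate : Loop × PosPeriod → ℕ → Loop × PosPeriod
  /-- the time-shifted curve `(Γ(s+·), p)` of `(Γ,p)` -/
  shift : ℝ → Loop × PosPeriod → Loop × PosPeriod
  /-- the time-reversed curve `t ↦ γ(-t)` -/
  reverse : Loop × PosPeriod → Loop × PosPeriod
  /-- `γ` and `ζ` are geometrically equivalent periodic curves (time shifts or
  iterates of one common curve); "infinitely many geometrically distinct periodic
  orbits" is understood with respect to this relation -/
  GeomEq : Loop × PosPeriod → Loop × PosPeriod → Prop
  /-- the fundamental group `π₁(M)` -/
  pi1 : Type
  [instGroup : Group pi1]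
  /-- the free homotopy class of a periodic curve: the conjugacy class of `π₁(M)`
  corresponding to its connected component in the free loop space -/
  freeClass : Loop × PosPeriod → ConjClasses pi1
  /-- the Mañé critical value `c(L) = min{e | S_e ≥ 0}` -/
  mane : ℝ
  /-- the Mañé critical value `c_u(L)` of the lift of `L` to the universal cover -/
  maneU : ℝ
  /-- the value `e₀(L) = max_q E(q,0)` -/
  e0 : ℝ
  /-- the function `q ↦ E(q,0)` -/
  restEnergy : Conf → ℝ
  /-- the Aubry set `𝓐(L) ⊆ TM` -/
  Aubry : Set Phase
  /-- the Morse index `ind(γ)` of the free-period action functional `S_e` at a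
  critical point `γ` -/
  ind : ℝ → Loop × PosPeriod → ℕ
  /-- `nul(γ)`, where `nul(γ) + 1` is the nullity of `S_e` at a critical point `γ`;
  `nul(γ) = dim ker(P − I)` for the Poincaré map `P` of `γ` -/
  nul : ℝ → Loop × PosPeriod → ℕ
  /-- `γ` is a hyperbolic periodic orbit with energy `e`: no eigenvalue of its
  Poincaré map lies on the unit circle -/
  IsHyperbolic : ℝ → Loop × PosPeriod → Prop
  -- Axioms:
  /-- the closed manifold `M` is nonempty, hence so is its loop space -/
  loop_nonempty : Nonempty Loop
  /-- `e₀(L)` is the maximum of `E(·,0)` -/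
  e0_spec : IsGreatest (Set.range restEnergy) e0
  /-- `c_u(L) ≤ c(L)` -/
  maneU_le_mane : maneU ≤ mane
  /-- `S_{c(L)} ≥ 0` on all periodic curves -/
  mane_nonneg : ∀ γ, 0 ≤ lagAction γ + mane * (γ.2 : ℝ)
  /-- `c(L)` is the minimal energy value with `S_e ≥ 0` -/
  mane_min : ∀ e : ℝ, (∀ γ, 0 ≤ lagAction γ + e * (γ.2 : ℝ)) → mane ≤ e
  iterate_one : ∀ γ, iterate γ 1 = γ
  /-- `γ^m` has period `mp` -/
  iterate_period : ∀ γ (m : ℕ), 1 ≤ m → ((iterate γ m).2 : ℝ) = m * (γ.2 : ℝ)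
  /-- `∫ L` over `γ^m` is `m` times the one over `γ`; hence `S_e(γ^m) = m·S_e(γ)` -/
  iterate_action : ∀ γ (m : ℕ), 1 ≤ m → lagAction (iterate γ m) = m * lagAction γ
  /-- iterates of periodic orbits are periodic orbits -/
  iterate_isOrbit : ∀ (e : ℝ) γ (m : ℕ), 1 ≤ m → IsOrbit e γ → IsOrbit e (iterate γ m)
  shift_isOrbit : ∀ (e s : ℝ) γ, IsOrbit e γ → IsOrbit e (shift s γ)
  shift_action : ∀ (s : ℝ) γ, lagAction (shift s γ) = lagAction γ
  shift_period : ∀ (s : ℝ) γ, (shift s γ).2 = γ.2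
  geomEq_shift : ∀ (s : ℝ) γ, GeomEq γ (shift s γ)
  geomEq_iterate : ∀ γ (m : ℕ), 1 ≤ m → GeomEq γ (iterate γ m)
  /-- a periodic orbit with energy `c(L)` and vanishing free-period action lies in
  the Aubry set; in particular its initial point is a periodic point of the flow -/
  aubry_of_zero_action : ∀ γ, IsOrbit mane γ → lagAction γ + mane * (γ.2 : ℝ) = 0 →
    ∃ z ∈ Aubry, flow (γ.2 : ℝ) z = z
  /-- conversely, a periodic orbit with energy `c(L)` contained in the Aubry set has
  vanishing free-period action, since `S_{c(L)}(γ) = -Φ_{c(L)}(γ(p),γ(0)) = 0` -/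
  zero_action_of_aubry_orbit : ∀ γ, IsOrbit mane γ → phaseImage γ ⊆ Aubry →
    lagAction γ + mane * (γ.2 : ℝ) = 0
  /-- hyperbolic periodic orbits have vanishing `nul` -/
  nul_eq_zero_of_hyperbolic : ∀ (e : ℝ) γ, IsHyperbolic e γ → nul e γ = 0
  /-- for every `e > c_u(L)`, the free-period action functional `S_e` is bounded
  from below on each connected component of `𝓜` -/
  bddBelow_of_maneU_lt : ∀ e : ℝ, maneU < e → ∀ γ₀ : Loop × PosPeriod,
    BddBelow ((fun γ => lagAction γ + e * (γ.2 : ℝ)) '' connectedComponent γ₀)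

attribute [instance] TonelliSystem.instLoopTop TonelliSystem.instGroup

namespace TonelliSystem

variable (T : TonelliSystem)

/-- The space `𝓜 = W^{1,2}(ℝ/ℤ, M) × (0,∞)` of periodic curves. -/
abbrev Curve : Type := T.Loop × PosPeriod

/-- The free-period action functional `S_e(Γ,p) = ∫₀ᵖ L(γ,γ̇) dt + p·e`. -/
def S (e : ℝ) (γ : T.Curve) : ℝ := T.lagAction γ + e * (γ.2 : ℝ)

/-- A waist with energy `e`: a critical point of `S_e` (i.e. a periodic orbit with
energy `e`) which is a local minimizer of `S_e`. -/
def IsWaist (e : ℝ) (γ : T.Curve) : Prop := T.IsOrbit e γ ∧ IsLocalMin (T.S e) γ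

/-- A periodic curve is contractible iff its free homotopy class is the trivial
conjugacy class of `π₁(M)`. -/
def Contractible (γ : T.Curve) : Prop := T.freeClass γ = ConjClasses.mk 1

/-- "There are infinitely many geometrically distinct periodic orbits with energy
`e` satisfying `P`": no finite set of periodic curves exhausts them up to
geometric equivalence. -/
def InfManyOrbits (e : ℝ) (P : T.Curve → Prop) : Prop :=
  ∀ F : Set T.Curve, F.Finite →
    ∃ γ : T.Curve, T.IsOrbit e γ ∧ P γ ∧ ∀ ζ ∈ F, ¬ T.GeomEq γ ζ

/-- An orbit cylinder over the interval `(a,b)`: a continuous (indeed smooth)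
family `e ↦ γ_e` of periodic orbits, `γ_e` of energy `e`. -/
def IsOrbitCylinder (a b : ℝ) (cyl : ℝ → T.Curve) : Prop :=
  ContinuousOn cyl (Set.Ioo a b) ∧ ∀ e ∈ Set.Ioo a b, T.IsOrbit e (cyl e)

/-- The critical circle `C_γ = {(Γ(s+·), p) | s ∈ ℝ/ℤ}` of a periodic orbit. -/
def critCircle (γ : T.Curve) : Set T.Curve := Set.range fun s : ℝ => T.shift s γ

/-- The minmax value `inf_u max_{s∈[0,1]} S_e(u(s))` over continuous paths `u` in
`𝓜` joining `γ` to `ζ`. -/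
noncomputable def minmax (e : ℝ) (γ ζ : T.Curve) : ℝ :=
  sInf {m : ℝ | ∃ u : ℝ → T.Curve, Continuous u ∧ u 0 = γ ∧ u 1 = ζ ∧
    ∀ t ∈ Set.Icc (0 : ℝ) 1, T.S e (u t) ≤ m}

/-- The Tonelli Lagrangian is reversible (`L(q,v) = L(q,-v)`): time reversal
preserves action, period, and periodic orbits. -/
def Reversible : Prop :=
  (∀ γ : T.Curve, T.lagAction (T.reverse γ) = T.lagAction γ) ∧
  (∀ γ : T.Curve, (T.reverse γ).2 = γ.2) ∧
  (∀ (e : ℝ) (γ : T.Curve), T.IsOrbit e γ → T.IsOrbit e (T.reverse γ))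

end TonelliSystem

/-- Let `e > c_u(L)`, let `γ` be a periodic orbit of `L` with energy `e`, `n ≥ 1`,
and suppose that there are infinitely many positive integers `k 0 < k 1 < k 2 < ⋯`
such that all the iterates `γ^{n · k i}` lie in the same connected component of
`𝓜 = W^{1,2}(ℝ/ℤ,M) × (0,∞)` (i.e. they are all freely homotopic to one another).
Then `S_e(γ^n) > 0`. -/
theorem TonelliSystem.positive_action_of_iterates_homotopic (T : TonelliSystem)
    (e : ℝ) (he : T.maneU < e) (γ : T.Curve) (hγ : T.IsOrbit e γ)
    (n : ℕ) (hn : 1 ≤ n) (k : ℕ → ℕ) (hk1 : ∀ i, 1 ≤ k i) (hmono : StrictMono k)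
    (hcomp : ∀ i j : ℕ,
      T.iterate γ (n * k i) ∈ connectedComponent (T.iterate γ (n * k j))) :
    0 < T.S e (T.iterate γ n) := by

  by_contra h
  push_neg at h
  set p : ℝ := (γ.2 : ℝ) with hp
  have hp0 : 0 < p := γ.2.2
  have hSn : T.S e (T.iterate γ n) = n * (T.lagAction γ + e * p) := by
    simp [TonelliSystem.S, T.iterate_action γ n hn, T.iterate_period γ n hn]
    ring
  have hnpos : (0:ℝ) < n := by exact_mod_cast hn
  have hSγ : T.lagAction γ + e * p ≤ 0 := by
    nlinarith [hSn ▸ h]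
  set e' : ℝ := (T.maneU + e) / 2 with he'
  have he'1 : T.maneU < e' := by simp [he']; linarith
  have he'2 : e' < e := by simp [he']; linarith
  set c : ℝ := T.lagAction γ + e' * p with hc
  have hcneg : c < 0 := by
    have : c = (T.lagAction γ + e * p) + (e' - e) * p := by ring
    nlinarith
  obtain ⟨b, hb⟩ := T.bddBelow_of_maneU_lt e' he'1 (T.iterate γ (n * k 0))
  obtain ⟨N, hN⟩ := exists_nat_gt (b / c / n)
  have hk : 1 ≤ n * k N := Nat.one_le_iff_ne_zero.mpr (Nat.mul_ne_zero (by omega) (by have := hk1 N; omega))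
  have hmem : T.iterate γ (n * k N) ∈ connectedComponent (T.iterate γ (n * k 0)) := by
    simpa using hcomp N 0
  have hval : (fun ζ => T.lagAction ζ + e' * (ζ.2 : ℝ)) (T.iterate γ (n * k N))
      = (n * k N : ℕ) * c := by
    simp [T.iterate_action γ _ hk, T.iterate_period γ _ hk, hc]
    ring
  have hbv : b ≤ (n * k N : ℕ) * c := by
    have := hb ⟨T.iterate γ (n * k N), hmem, hval⟩
    linarith [this]
  have hkN : (N : ℝ) ≤ (k N : ℝ) := by exact_mod_cast (hmono.le_apply)
  have hnk : b / c / n < (k N : ℝ) := lt_of_lt_of_le hN hkN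
  have h1 : b / c < n * (k N : ℝ) := by
    rw [div_lt_iff₀ hnpos] at hnk; linarith
  have h2 : (n * (k N : ℝ)) * c < b := by
    rw [div_lt_iff_of_neg hcneg] at h1; linarith
  have : ((n * k N : ℕ) : ℝ) = n * (k N : ℝ) := by push_cast; ring
  rw [this] at hbv
  linarith
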